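/- arXiv:0807.4988 — 3 statements merged into one kernel-verified Lean document; each statement's English description precedes it below -/
import Mathlib

section
/- If J and K are closed two-sided ideals of a C*-algebra C, then J + K is a closed ideal of C. -/
/-!
For `z ∈ K`, an approximate unit `e` of the C⋆-algebra `J` gives `e z ∈ J ∩ K` with
`‖z - e z‖ ≤ ‖(1 - e)(z - j)‖ + ‖j - e j‖ ≈ ‖z - j‖` for any `j ∈ J`; hence
`dist(z, J ∩ K) ≤ dist(z, J)`, i.e. `K / (J ∩ K) → C / J` is isometric. Consequently every
`j + k ∈ J + K` can be rewritten as `(j + c) + (k - c)` with `c ∈ J ∩ K` and both summands of norm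
at most `3 ‖j + k‖`. Such a norm-controlled preimage under the addition map `J × K → C` persists on
the closure of `J + K` because `J × K` is complete, so that closure is `J + K` itself.
-/

open Metric

namespace AddSubgroup

variable {E : Type*} [NormedAddCommGroup E] {J K : AddSubgroup E}

theorem exists_controlled_decomposition_of_infDist_inter_le
    (h : ∀ z ∈ K, infDist z ((J : Set E) ∩ K) ≤ infDist z J) {x : E} (hx : x ∈ J ⊔ K) :
    ∃ y ∈ J, ∃ z ∈ K, y + z = x ∧ ‖y‖ ≤ 3 * ‖x‖ ∧ ‖z‖ ≤ 3 * ‖x‖ := by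
  obtain ⟨y, hy, z, hz, rfl⟩ := mem_sup.1 hx
  rcases eq_or_ne (y + z) 0 with h0 | h0
  · exact ⟨0, J.zero_mem, 0, K.zero_mem, by simp [h0]⟩
  have hdist : infDist z ((J : Set E) ∩ K) < 2 * ‖y + z‖ := by
    refine (h z hz).trans_lt ((infDist_le_dist_of_mem (neg_mem hy)).trans_lt ?_)
    rw [dist_eq_norm, sub_neg_eq_add, add_comm]
    linarith [norm_pos_iff.2 h0]
  have hne : ((J : Set E) ∩ K).Nonempty := ⟨0, J.zero_mem, K.zero_mem⟩
  obtain ⟨c, ⟨hcJ, hcK⟩, hc⟩ := (infDist_lt_iff hne).1 hdist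
  rw [dist_eq_norm] at hc
  have hyc : ‖y + c‖ ≤ ‖y + z‖ + ‖z - c‖ := by
    rw [show y + c = y + z - (z - c) by abel]
    exact norm_sub_le _ _
  refine ⟨y + c, add_mem hy hcJ, z - c, sub_mem hz hcK, by abel, ?_, ?_⟩ <;>
    linarith [norm_nonneg (y + z)]

theorem isClosed_sup_of_infDist_inter_le [CompleteSpace E]
    (hJ : IsClosed (J : Set E)) (hK : IsClosed (K : Set E))
    (h : ∀ z ∈ K, infDist z ((J : Set E) ∩ K) ≤ infDist z J) :
    IsClosed ((J ⊔ K : AddSubgroup E) : Set E) := by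
  have := hJ.completeSpace_coe
  have := hK.completeSpace_coe
  let add : NormedAddGroupHom (J × K) E :=
    (J.subtype.coprod K.subtype).mkNormedAddGroupHom 2 fun g => by
      have h₁ : ‖(g.1 : E)‖ ≤ ‖g‖ := norm_fst_le g
      have h₂ : ‖(g.2 : E)‖ ≤ ‖g‖ := norm_snd_le g
      simp only [AddMonoidHom.coprod_apply, coe_subtype]
      linarith [norm_add_le (g.1 : E) g.2]
  have hsurj : add.SurjectiveOnWith (J ⊔ K) 3 := fun x hx => by
    obtain ⟨y, hy, z, hz, hyz, hy3, hz3⟩ :=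
      exists_controlled_decomposition_of_infDist_inter_le h hx
    exact ⟨(⟨y, hy⟩, ⟨z, hz⟩), hyz, norm_prod_le_iff.2 ⟨hy3, hz3⟩⟩
  refine isClosed_of_closure_subset fun x hx => ?_
  obtain ⟨g, rfl, -⟩ := controlled_closure_of_complete (by norm_num) one_pos hsurj x hx
  exact add_mem (mem_sup_left g.1.2) (mem_sup_right g.2.2)

end AddSubgroup

theorem norm_sub_mul_le_of_nonneg_of_norm_le_one {A : Type*} [NonUnitalCStarAlgebra A]
    [PartialOrder A] [StarOrderedRing A] {e : A} (he₀ : 0 ≤ e) (he₁ : ‖e‖ ≤ 1) (w : A) :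
    ‖w - e * w‖ ≤ ‖w‖ :=
  CStarAlgebra.norm_sub_mul_self_le_of_inr w le_rfl he₀ he₁ (norm_nonneg w) <| by
    simp [CStarRing.norm_star_mul_self, sq, Unitization.norm_inr]

namespace TwoSidedIdeal

variable {A : Type*} [NonUnitalCStarAlgebra A]

theorem smul_mem_of_isClosed {I : TwoSidedIdeal A} (hI : IsClosed (I : Set A)) (c : ℂ) {x : A}
    (hx : x ∈ I) : c • x ∈ I := by
  let _ := CStarAlgebra.spectralOrder A
  let _ := CStarAlgebra.spectralOrderedRing A
  refine hI.mem_of_tendsto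
    (((CStarAlgebra.increasingApproximateUnit A).tendsto_mul_left x).const_smul c)
    (Filter.Eventually.of_forall fun e => ?_)
  rw [← mul_smul_comm]
  exact I.mul_mem_right _ _ hx

def toNonUnitalStarSubalgebra (I : TwoSidedIdeal A) (hI : IsClosed (I : Set A))
    (hstar : ∀ x ∈ I, star x ∈ I) : NonUnitalStarSubalgebra ℂ A where
  carrier := I
  add_mem' := I.add_mem
  zero_mem' := I.zero_mem
  mul_mem' _ hy := I.mul_mem_left _ _ hy
  smul_mem' c _ hx := smul_mem_of_isClosed hI c hx
  star_mem' := hstar _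

theorem exists_mem_forall_norm_sub_mul_le_and_norm_sub_mul_lt {I : TwoSidedIdeal A}
    (hI : IsClosed (I : Set A)) (hstar : ∀ x ∈ I, star x ∈ I) {x : A} (hx : x ∈ I) {ε : ℝ}
    (hε : 0 < ε) : ∃ e ∈ I, (∀ w, ‖w - e * w‖ ≤ ‖w‖) ∧ ‖x - e * x‖ < ε := by
  let S := I.toNonUnitalStarSubalgebra hI hstar
  have : IsClosed (S : Set A) := hI
  let _ := CStarAlgebra.spectralOrder S
  let _ := CStarAlgebra.spectralOrderedRing S
  have hl := CStarAlgebra.increasingApproximateUnit S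
  obtain ⟨e, he₀, he₁, hex⟩ := (hl.eventually_nonneg.and <| hl.eventually_norm.and <|
    (hl.tendsto_mul_right (⟨x, hx⟩ : S)).eventually (ball_mem_nhds _ hε)).exists
  -- Writing `e = star y * y` moves positivity to `A` without comparing the spectral order of `S`
  -- with the order `S` inherits from `A`.
  obtain ⟨y, rfl⟩ := CStarAlgebra.nonneg_iff_eq_star_mul_self.mp he₀
  let _ := CStarAlgebra.spectralOrder A
  let _ := CStarAlgebra.spectralOrderedRing A
  refine ⟨star y * y, (star y * y).2,
    norm_sub_mul_le_of_nonneg_of_norm_le_one (star_mul_self_nonneg (y : A)) he₁, ?_⟩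
  rw [dist_comm, dist_eq_norm] at hex
  exact hex

theorem infDist_inter_le_infDist {J K : TwoSidedIdeal A} (hJ : IsClosed (J : Set A))
    (hJstar : ∀ x ∈ J, star x ∈ J) {z : A} (hz : z ∈ K) :
    infDist z ((J : Set A) ∩ K) ≤ infDist z J := by
  refine (le_infDist ⟨0, J.zero_mem⟩).2 fun j hj => le_of_forall_pos_lt_add fun δ hδ => ?_
  obtain ⟨e, heJ, he, hej⟩ :=
    exists_mem_forall_norm_sub_mul_le_and_norm_sub_mul_lt hJ hJstar hj hδ
  calc infDist z ((J : Set A) ∩ K) ≤ dist z (e * z) :=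
        infDist_le_dist_of_mem ⟨J.mul_mem_right _ _ heJ, K.mul_mem_left _ _ hz⟩
    _ = ‖(z - j - e * (z - j)) + (j - e * j)‖ := by
        rw [dist_eq_norm, mul_sub]
        congr 1
        abel
    _ ≤ ‖z - j - e * (z - j)‖ + ‖j - e * j‖ := norm_add_le _ _
    _ < dist z j + δ := by
        rw [dist_eq_norm]
        exact add_lt_add_of_le_of_lt (he _) hej

theorem isClosed_sup {J K : TwoSidedIdeal A} (hJ : IsClosed (J : Set A))
    (hK : IsClosed (K : Set A)) (hJstar : ∀ x ∈ J, star x ∈ J) :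
    IsClosed ((J ⊔ K : TwoSidedIdeal A) : Set A) := by
  have hsup : ((J ⊔ K : TwoSidedIdeal A) : Set A) =
      (AddSubgroup.ofClass J ⊔ AddSubgroup.ofClass K : AddSubgroup A) := by
    ext
    simp only [SetLike.mem_coe, mem_sup, AddSubgroup.mem_sup]
    rfl
  rw [hsup]
  exact AddSubgroup.isClosed_sup_of_infDist_inter_le hJ hK
    fun z hz => infDist_inter_le_infDist hJ hJstar hz

end TwoSidedIdeal

theorem sum_of_closed_ideals_isClosed_general
    {C : Type*} [NonUnitalNormedRing C] [StarRing C] [CStarRing C]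
    [NormedSpace ℂ C] [IsScalarTower ℂ C C] [SMulCommClass ℂ C C]
    [StarModule ℂ C] [CompleteSpace C]
    (J K : TwoSidedIdeal C)
    (hJstar : ∀ x ∈ J, star x ∈ J)
    (hJ : IsClosed (J : Set C)) (hK : IsClosed (K : Set C)) :
    IsClosed {x : C | ∃ j ∈ J, ∃ k ∈ K, x = j + k} ∧
      ∃ I : TwoSidedIdeal C, (I : Set C) = {x : C | ∃ j ∈ J, ∃ k ∈ K, x = j + k} := by
  let _ : NonUnitalCStarAlgebra C := {}
  have hsum : ((J ⊔ K : TwoSidedIdeal C) : Set C) = {x : C | ∃ j ∈ J, ∃ k ∈ K, x = j + k} := by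
    ext
    simp [TwoSidedIdeal.mem_sup, eq_comm]
  exact ⟨hsum ▸ TwoSidedIdeal.isClosed_sup hJ hK hJstar, J ⊔ K, hsum⟩

/-- If `J` and `K` are closed two-sided ideals of a C*-algebra `C`, then
`J + K = {j + k : j ∈ J, k ∈ K}` is again a closed two-sided ideal of `C`. -/
theorem sum_of_closed_ideals_isClosed
    {C : Type*} [NonUnitalNormedRing C] [StarRing C] [CStarRing C]
    [NormedSpace ℂ C] [IsScalarTower ℂ C C] [SMulCommClass ℂ C C]
    [StarModule ℂ C] [CompleteSpace C]
    (J K : TwoSidedIdeal C)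
    (hJstar : ∀ x ∈ J, star x ∈ J) (hKstar : ∀ x ∈ K, star x ∈ K)
    (hJ : IsClosed (J : Set C)) (hK : IsClosed (K : Set C)) :
    IsClosed {x : C | ∃ j ∈ J, ∃ k ∈ K, x = j + k} ∧
      ∃ I : TwoSidedIdeal C, (I : Set C) = {x : C | ∃ j ∈ J, ∃ k ∈ K, x = j + k} :=
  sum_of_closed_ideals_isClosed_general J K hJstar hJ hK
end

section
/- The canonical *-homomorphism from the free *-algebra ℂ[X ∪ X*] on a set X (the *-algebra of noncommutative *-polynomials in the variables X with zero constant term) into the universal C*-algebra C*⟨X | ‖x‖ ≤ 2 for all x ∈ X⟩ (universal for functions f: X → A into C*-algebras A with ‖f(x)‖ ≤ 2) is injective. -/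
noncomputable section GM
open Function
open scoped ENNReal

namespace GMaux

variable {S : Type}

abbrev HS (S : Type) : Type := lp (fun _ : List S => ℂ) 2

open scoped Classical in
def e (w : List S) : HS S := lp.single 2 w 1

lemma coe_mk (F : List S → ℂ) (hF : Memℓp F 2) : ((⟨F, hF⟩ : HS S) : List S → ℂ) = F := rfl

lemma two_toReal_pos : (0:ℝ) < (2 : ℝ≥0∞).toReal := by norm_num

section ops
variable {g : List S → List S}

lemma memℓp_pull (hg : Function.Injective g) (f : HS S) :
    Memℓp (fun w => (f : List S → ℂ) (g w)) 2 := by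
  apply memℓp_gen
  exact ((lp.memℓp f).summable two_toReal_pos).comp_injective hg

lemma extend_norm_rpow (f : List S → ℂ) :
    (fun w => ‖Function.extend g f 0 w‖ ^ (2 : ℝ≥0∞).toReal) =
      Function.extend g (fun v => ‖f v‖ ^ (2 : ℝ≥0∞).toReal) 0 := by
  funext w
  rw [show (0 : List S → ℂ) = fun _ => (0:ℂ) from rfl,
    Function.apply_extend (fun z : ℂ => ‖z‖ ^ (2 : ℝ≥0∞).toReal) g _ w]
  congr 1
  funext v
  simp [Real.zero_rpow (ne_of_gt two_toReal_pos)]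

lemma memℓp_push (hg : Function.Injective g) (f : HS S) :
    Memℓp (Function.extend g (⇑f) 0) 2 := by
  apply memℓp_gen
  rw [show (fun w => ‖Function.extend g (⇑f) 0 w‖ ^ (2 : ℝ≥0∞).toReal) =
      Function.extend g (fun v => ‖(f : List S → ℂ) v‖ ^ (2 : ℝ≥0∞).toReal) 0 from
        extend_norm_rpow _, summable_extend_zero hg]
  exact (lp.memℓp f).summable two_toReal_pos

def pullLM (hg : Function.Injective g) : HS S →ₗ[ℂ] HS S where
  toFun f := ⟨fun w => f (g w), memℓp_pull hg f⟩
  map_add' f h := by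
    apply Subtype.ext
    simp only [coe_mk, lp.coeFn_add]
    funext w
    simp [lp.coeFn_add]
  map_smul' c f := by
    apply Subtype.ext
    funext w
    simp [coe_mk, lp.coeFn_smul]

lemma extend_add (x y : List S → ℂ) (hg : Function.Injective g) :
    Function.extend g (x + y) 0 = Function.extend g x 0 + Function.extend g y 0 := by
  funext w
  by_cases hw : ∃ v, g v = w
  · obtain ⟨v, rfl⟩ := hw
    simp [hg.extend_apply]
  · simp [Function.extend_apply' _ _ _ hw]

lemma extend_smul (c : ℂ) (x : List S → ℂ) (hg : Function.Injective g) :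
    Function.extend g (c • x) 0 = c • Function.extend g x 0 := by
  funext w
  by_cases hw : ∃ v, g v = w
  · obtain ⟨v, rfl⟩ := hw
    simp [hg.extend_apply]
  · simp [Function.extend_apply' _ _ _ hw]

def pushLM (hg : Function.Injective g) : HS S →ₗ[ℂ] HS S where
  toFun f := ⟨Function.extend g (⇑f) 0, memℓp_push hg f⟩
  map_add' f h := by
    apply Subtype.ext
    simp only [coe_mk, lp.coeFn_add]
    rw [show ⇑f + ⇑h = (⇑f + ⇑h : List S → ℂ) from rfl, extend_add _ _ hg]
  map_smul' c f := by
    apply Subtype.ext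
    simp only [coe_mk, lp.coeFn_smul, RingHom.id_apply]
    rw [show (c • ⇑f : List S → ℂ) = c • ⇑f from rfl, extend_smul _ _ hg]

lemma pullLM_norm (hg : Function.Injective g) (f : HS S) : ‖pullLM hg f‖ ≤ ‖f‖ := by
  apply lp.norm_le_of_tsum_le two_toReal_pos (norm_nonneg _)
  rw [lp.norm_rpow_eq_tsum two_toReal_pos f]
  refine Summable.tsum_le_tsum_of_inj g hg (fun c _ => Real.rpow_nonneg (norm_nonneg _) _)
    (fun b => le_of_eq rfl) ?_ ?_
  · exact ((lp.memℓp f).summable two_toReal_pos).comp_injective hg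
  · exact (lp.memℓp f).summable two_toReal_pos

lemma pushLM_norm (hg : Function.Injective g) (f : HS S) : ‖pushLM hg f‖ ≤ ‖f‖ := by
  apply lp.norm_le_of_tsum_le two_toReal_pos (norm_nonneg _)
  rw [lp.norm_rpow_eq_tsum two_toReal_pos f]
  have : (fun w => ‖(pushLM hg f : List S → ℂ) w‖ ^ (2 : ℝ≥0∞).toReal) =
      Function.extend g (fun v => ‖(f : List S → ℂ) v‖ ^ (2 : ℝ≥0∞).toReal) 0 :=
    extend_norm_rpow _
  rw [this, tsum_extend_zero hg]

def pull (hg : Function.Injective g) : HS S →L[ℂ] HS S :=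
  LinearMap.mkContinuous (pullLM hg) 1 (by simpa using pullLM_norm hg)

def push (hg : Function.Injective g) : HS S →L[ℂ] HS S :=
  LinearMap.mkContinuous (pushLM hg) 1 (by simpa using pushLM_norm hg)

lemma norm_pull (hg : Function.Injective g) : ‖pull hg‖ ≤ 1 :=
  LinearMap.mkContinuous_norm_le _ zero_le_one _

lemma norm_push (hg : Function.Injective g) : ‖push hg‖ ≤ 1 :=
  LinearMap.mkContinuous_norm_le _ zero_le_one _

lemma pull_apply (hg : Function.Injective g) (f : HS S) (w : List S) :
    (pull hg f : List S → ℂ) w = f (g w) := rfl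

lemma push_apply (hg : Function.Injective g) (f : HS S) (w : List S) :
    (push hg f : List S → ℂ) w = Function.extend g (⇑f) 0 w := rfl


open scoped Classical in
lemma e_apply (v u : List S) : (e v : List S → ℂ) u = if u = v then 1 else 0 := by
  rcases eq_or_ne u v with h | h
  · subst h; simp [e, lp.single_apply_self]
  · simp [e, lp.single_apply_ne _ _ _ h, h]

lemma push_e (hg : Function.Injective g) (v : List S) : push hg (e v) = e (g v) := by
  apply Subtype.ext
  funext w
  rw [push_apply]
  by_cases hw : ∃ u, g u = w
  · obtain ⟨u, rfl⟩ := hw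
    rw [hg.extend_apply, e_apply, e_apply]
    by_cases h : u = v
    · subst h; simp
    · rw [if_neg h, if_neg fun hh => h (hg hh)]
  · rw [Function.extend_apply' _ _ _ hw]
    simp only [Pi.zero_apply, e_apply]
    rw [if_neg]
    rintro rfl
    exact hw ⟨v, rfl⟩

lemma pull_e_mem (hg : Function.Injective g) (v : List S) : pull hg (e (g v)) = e v := by
  apply Subtype.ext
  funext w
  rw [pull_apply, e_apply, e_apply]
  by_cases h : w = v
  · subst h; simp
  · rw [if_neg h, if_neg fun hh => h (hg hh)]

lemma pull_e_notmem (hg : Function.Injective g) {u : List S} (hu : u ∉ Set.range g) :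
    pull hg (e u) = 0 := by
  apply Subtype.ext
  funext w
  rw [pull_apply, e_apply, if_neg, lp.coeFn_zero, Pi.zero_apply]
  rintro rfl
  exact hu ⟨w, rfl⟩

open scoped InnerProductSpace in
lemma star_push (hg : Function.Injective g) : star (push hg) = pull hg := by
  rw [ContinuousLinearMap.star_eq_adjoint]
  refine (((ContinuousLinearMap.eq_adjoint_iff (pull hg) (push hg)).2 fun x y => ?_)).symm
  rw [lp.inner_eq_tsum, lp.inner_eq_tsum]
  have hsupp : support (fun v => (inner ℂ ((x : List S → ℂ) v) ((push hg y : List S → ℂ) v) : ℂ))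
      ⊆ Set.range g := by
    intro v hv
    by_contra hvr
    apply hv
    show (inner ℂ ((x : List S → ℂ) v) ((push hg y : List S → ℂ) v) : ℂ) = 0
    rw [push_apply, Function.extend_apply' _ _ _ (fun hh => hvr hh)]
    simp
  rw [← Function.Injective.tsum_eq hg hsupp]
  congr 1
  funext w
  rw [pull_apply, push_apply, hg.extend_apply]

lemma star_pull (hg : Function.Injective g) : star (pull hg) = push hg := by
  rw [← star_push hg, star_star]

end ops

section alg
variable (σ : S → S)

lemma cons_inj (s : S) : Function.Injective (fun w : List S => s :: w) :=
  fun _ _ h => by injection h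

def op (s : S) : HS S →L[ℂ] HS S :=
  push (cons_inj s) + pull (cons_inj (σ s))

lemma norm_op (s : S) : ‖op σ s‖ ≤ 2 := by
  refine (norm_add_le _ _).trans ?_
  have h1 := norm_push (cons_inj (S := S) s)
  have h2 := norm_pull (cons_inj (S := S) (σ s))
  linarith

lemma star_op (s : S) : star (op σ s) = push (cons_inj (σ s)) + pull (cons_inj s) := by
  rw [op, star_add, star_push, star_pull, add_comm]

lemma op_e (s : S) (v : List S) :
    op σ s (e v) = e (s :: v) + pull (cons_inj (σ s)) (e v) := by
  rw [op, ContinuousLinearMap.add_apply, push_e]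

lemma eval_word (w : List S) :
    ∃ err : HS S,
      (FreeAlgebra.lift ℂ (op σ)) ((w.map (FreeAlgebra.ι ℂ)).prod) (e ([] : List S))
        = e w + err ∧
      ∀ u : List S, (err : List S → ℂ) u ≠ 0 → u.length < w.length := by
  induction w with
  | nil =>
    refine ⟨0, ?_, ?_⟩
    · simp
    · intro u hu
      simp [lp.coeFn_zero] at hu
  | cons s w ih =>
    obtain ⟨err, heq, hlen⟩ := ih
    refine ⟨pull (cons_inj (σ s)) (e w) + op σ s err, ?_, ?_⟩
    · rw [List.map_cons, List.prod_cons, map_mul, FreeAlgebra.lift_ι_apply,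
        ContinuousLinearMap.mul_apply, heq, map_add, op_e]
      abel
    · intro u hu
      simp only [lp.coeFn_add, Pi.add_apply, op, ContinuousLinearMap.add_apply] at hu
      have h3 : (pull (cons_inj (σ s)) (e w) : List S → ℂ) u ≠ 0 ∨
          ((push (cons_inj s) err : List S → ℂ) u ≠ 0 ∨
            (pull (cons_inj (σ s)) err : List S → ℂ) u ≠ 0) := by
        by_contra hc
        push_neg at hc
        rw [hc.1, hc.2.1, hc.2.2] at hu
        simp at hu
      rcases h3 with h | h | h
      · rw [pull_apply, e_apply] at h
        split_ifs at h with hif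
        · have := congrArg List.length hif
          simp only [List.length_cons] at this ⊢
          omega
        · exact absurd rfl h
      · rw [push_apply] at h
        by_cases hrange : ∃ v, (fun w : List S => s :: w) v = u
        · obtain ⟨v, hv⟩ := hrange
          rw [← hv, (cons_inj s).extend_apply] at h
          have := hlen v h
          rw [← hv]
          simp only [List.length_cons]
          omega
        · rw [Function.extend_apply' _ _ _ hrange] at h
          exact absurd rfl h
      · rw [pull_apply] at h
        have := hlen _ h
        simp only [List.length_cons] at this ⊢
        omega


lemma single_ofList_eq_prod (l : List S) :
    MonoidAlgebra.single (FreeMonoid.ofList l) (1:ℂ) =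
      (l.map (fun s => (MonoidAlgebra.single (FreeMonoid.of s) 1 : MonoidAlgebra ℂ (FreeMonoid S)))).prod := by
  induction l with
  | nil => rfl
  | cons s l ih =>
    rw [List.map_cons, List.prod_cons, ← ih,
      MonoidAlgebra.single_mul_single, one_mul]
    rfl

lemma symm_single_of (s : S) :
    (FreeAlgebra.equivMonoidAlgebraFreeMonoid (R := ℂ) (X := S)).symm
      (MonoidAlgebra.single (FreeMonoid.of s) 1) = FreeAlgebra.ι ℂ s := by
  rw [AlgEquiv.symm_apply_eq]
  simp [FreeAlgebra.equivMonoidAlgebraFreeMonoid]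

lemma basis_eq_prod (w : FreeMonoid S) :
    (FreeAlgebra.basisFreeMonoid ℂ S) w
      = ((FreeMonoid.toList w).map (FreeAlgebra.ι ℂ)).prod := by
  rw [FreeAlgebra.basisFreeMonoid, Module.Basis.map_apply]
  have h1 : (Finsupp.basisSingleOne (R := ℂ) (ι := FreeMonoid S)) w
      = Finsupp.single w 1 := by
    rw [Finsupp.coe_basisSingleOne (R := ℂ) (ι := FreeMonoid S)]
  rw [h1]
  have h2 : (MonoidAlgebra.ofCoeff (Finsupp.single w (1:ℂ)) : MonoidAlgebra ℂ (FreeMonoid S))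
      = MonoidAlgebra.single (FreeMonoid.ofList (FreeMonoid.toList w)) 1 := by
    rw [MonoidAlgebra.ofCoeff_single, FreeMonoid.ofList_toList]
  show (FreeAlgebra.equivMonoidAlgebraFreeMonoid (R := ℂ) (X := S)).symm
      (MonoidAlgebra.ofCoeff (Finsupp.single w 1)) = _
  rw [h2, single_ofList_eq_prod, map_list_prod, List.map_map]
  congr 1
  apply List.map_congr_left
  intro s _
  exact symm_single_of s

variable (σ : S → S)

lemma lift_op_eq_zero {r : FreeAlgebra ℂ S}
    (hr : FreeAlgebra.lift ℂ (op σ) r = 0) : r = 0 := by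
  classical
  by_contra hne
  set b := FreeAlgebra.basisFreeMonoid ℂ S with hbdef
  have hsupp : (b.repr r).support.Nonempty := by
    rw [Finsupp.support_nonempty_iff]
    intro h
    exact hne (b.repr.map_eq_zero_iff.mp h)
  obtain ⟨m, hm, hmax⟩ :=
    Finset.exists_max_image (b.repr r).support
      (fun w => (FreeMonoid.toList w).length) hsupp
  choose err herr hlen using fun w : FreeMonoid S => eval_word σ (FreeMonoid.toList w)
  have expand : (0 : HS S) =
      ∑ w ∈ (b.repr r).support, (b.repr r) w • (e (FreeMonoid.toList w) + err w) := by
    have hrsum : r = ∑ w ∈ (b.repr r).support, (b.repr r) w • b w := by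
      conv_lhs => rw [← b.linearCombination_repr r]
      rw [Finsupp.linearCombination_apply, Finsupp.sum]
    have h1 : FreeAlgebra.lift ℂ (op σ) r =
        ∑ w ∈ (b.repr r).support,
          (b.repr r) w • FreeAlgebra.lift ℂ (op σ) (b w) := by
      conv_lhs => rw [hrsum]
      rw [map_sum]
      refine Finset.sum_congr rfl fun w _ => ?_
      exact map_smul (FreeAlgebra.lift ℂ (op σ)).toLinearMap _ _
    have h2 : (0 : HS S) = (FreeAlgebra.lift ℂ (op σ) r) (e ([] : List S)) := by
      rw [hr]; simp
    rw [h2, h1, ContinuousLinearMap.sum_apply]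
    refine Finset.sum_congr rfl fun w _ => ?_
    rw [ContinuousLinearMap.smul_apply, basis_eq_prod, herr]
  have h0 := congrFun (congrArg (fun v : HS S => (v : List S → ℂ)) expand)
    (FreeMonoid.toList m)
  simp only [lp.coeFn_zero, Pi.zero_apply, lp.coeFn_sum, Finset.sum_apply,
    lp.coeFn_smul, Pi.smul_apply, lp.coeFn_add, Pi.add_apply] at h0
  have herrm : ∀ w ∈ (b.repr r).support,
      (err w : List S → ℂ) (FreeMonoid.toList m) = 0 := by
    intro w hw
    by_contra hval
    exact absurd (hmax w hw) (not_le.mpr (hlen w _ hval))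
  have hsum : ∀ w ∈ (b.repr r).support, w ≠ m →
      (b.repr r) w • ((e (FreeMonoid.toList w) : List S → ℂ) (FreeMonoid.toList m)
        + (err w : List S → ℂ) (FreeMonoid.toList m)) = 0 := by
    intro w hw hwm
    rw [herrm w hw, e_apply,
      if_neg (fun hh => hwm (FreeMonoid.toList.injective hh).symm)]
    simp
  rw [Finset.sum_eq_single_of_mem m hm hsum, herrm m hm, e_apply, if_pos rfl] at h0
  simp only [add_zero, smul_eq_mul, mul_one] at h0
  exact (Finsupp.mem_support_iff.mp hm) h0.symm

end alg
end GMaux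

end GM

open GMaux in
/-- (Goodearl–Menal)  Let `B = C*⟨X | ‖x‖ ≤ 2⟩` be the universal C*-algebra on
a set `X` subject to the relations `‖x‖ ≤ 2`, with universal representation
`ι : X → B`.  The canonical *-homomorphism from the free *-algebra
`ℂ[X ∪ X*]` (modelled as `FreeAlgebra ℂ (X ⊕ X)`, the second copy of `X`
mapping to adjoints) into (the unitization of) `B` is injective on the
*-polynomials with zero constant term. -/
theorem freeStarAlgebra_embeds_in_universal_CStarAlgebra
    {X : Type} {B : Type}
    [NonUnitalNormedRing B] [StarRing B] [CStarRing B] [NormedSpace ℂ B]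
    [IsScalarTower ℂ B B] [SMulCommClass ℂ B B] [StarModule ℂ B] [CompleteSpace B]
    (ι : X → B) (hι : ∀ x, ‖ι x‖ ≤ 2)
    (huniv : ∀ (A : Type) (_ : NonUnitalNormedRing A) (_ : StarRing A)
      (_ : CStarRing A) (_ : NormedSpace ℂ A) (_ : IsScalarTower ℂ A A)
      (_ : SMulCommClass ℂ A A) (_ : StarModule ℂ A) (_ : CompleteSpace A)
      (f : X → A), (∀ x, ‖f x‖ ≤ 2) →
        ∃! φ : B →⋆ₙₐ[ℂ] A, ∀ x, φ (ι x) = f x) :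
    ∀ p q : FreeAlgebra ℂ (X ⊕ X),
      (FreeAlgebra.lift ℂ (fun _ : X ⊕ X => (0 : ℂ))) p = 0 →
      (FreeAlgebra.lift ℂ (fun _ : X ⊕ X => (0 : ℂ))) q = 0 →
      (FreeAlgebra.lift ℂ (Sum.elim
          (fun x : X => (Unitization.inr (ι x) : Unitization ℂ B))
          (fun x : X => star (Unitization.inr (ι x) : Unitization ℂ B)))) p =
        (FreeAlgebra.lift ℂ (Sum.elim
          (fun x : X => (Unitization.inr (ι x) : Unitization ℂ B))
          (fun x : X => star (Unitization.inr (ι x) : Unitization ℂ B)))) q →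
      p = q := by
  intro p q hp hq h
  classical
  let A : Type := HS (X ⊕ X) →L[ℂ] HS (X ⊕ X)
  let c : X → A := fun x => GMaux.op Sum.swap (Sum.inl x)
  have hc : ∀ x, ‖c x‖ ≤ 2 := fun x => GMaux.norm_op _ _
  obtain ⟨φ, hφ, -⟩ := huniv A inferInstance inferInstance inferInstance inferInstance
    inferInstance inferInstance inferInstance inferInstance c hc
  let ψ : Unitization ℂ B →⋆ₐ[ℂ] A := Unitization.starLift φ
  have hψinr : ∀ b : B, ψ ((b : Unitization ℂ B)) = φ b := by
    intro b
    have h1 := Unitization.starLift_symm_apply_apply (R := ℂ) ψ b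
    have h2 : Unitization.starLift.symm ψ = φ := Equiv.symm_apply_apply _ φ
    rw [h2] at h1
    exact h1.symm
  have key : (ψ.toAlgHom.comp (FreeAlgebra.lift ℂ (Sum.elim
      (fun x : X => (Unitization.inr (ι x) : Unitization ℂ B))
      (fun x : X => star (Unitization.inr (ι x) : Unitization ℂ B)))))
      = FreeAlgebra.lift ℂ (GMaux.op Sum.swap) := by
    apply FreeAlgebra.hom_ext
    funext s
    cases s with
    | inl x =>
      simp only [Function.comp_apply, AlgHom.coe_comp, AlgHom.comp_apply, FreeAlgebra.lift_ι_apply, Sum.elim_inl]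
      show ψ (((ι x : B) : Unitization ℂ B)) = _
      rw [hψinr, hφ]
    | inr x =>
      simp only [Function.comp_apply, AlgHom.coe_comp, AlgHom.comp_apply, FreeAlgebra.lift_ι_apply, Sum.elim_inr]
      show ψ (star ((ι x : B) : Unitization ℂ B)) = _
      rw [map_star ψ, hψinr, hφ]
      show star (GMaux.op Sum.swap (Sum.inl x)) = GMaux.op Sum.swap (Sum.inr x)
      rw [GMaux.star_op]
      rfl
  have h2 : FreeAlgebra.lift ℂ (GMaux.op Sum.swap) p
      = FreeAlgebra.lift ℂ (GMaux.op Sum.swap) q := by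
    rw [← key, AlgHom.comp_apply, AlgHom.comp_apply, h]
  have h3 : FreeAlgebra.lift ℂ (GMaux.op Sum.swap) (p - q) = 0 := by
    rw [map_sub, h2, sub_self]
  exact sub_eq_zero.mp (GMaux.lift_op_eq_zero Sum.swap h3)
end

section
/- Let U be the full group C*-algebra of the free group on generators {ẋ, x̄ : x ∈ X}, and define φ on the free *-algebra ℂ[X ∪ X*] by φ(x) = ẋ + x̄. Then φ is an injective *-homomorphism. -/
/-!
The universal property of `U` gives a *-homomorphism `ρ : U → B(ℓ²(F))` extending the left regular
representation `λ`, so it suffices that `λ ∘ φ` is injective on `ℂ⟨X ∪ X*⟩`. The representation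
`λ` is faithful on the group algebra `ℂ[F]` (evaluate at `δ₁`), which reduces the claim to the
injectivity of `φ : ℂ⟨X ∪ X*⟩ → ℂ[F]`, `x ↦ ẋ + x̄`, `x* ↦ ẋ⁻¹ + x̄⁻¹`. A word of length `n` expands
into `2ⁿ` products of `n` letters; these have reduced length at most `n`, and a reduced word of
length `n` occurs only among the expansions of the word it lifts, exactly once. The alternating
lift `ẋ^{±1} x̄^{±1} ẋ^{±1} ⋯` of a word is reduced, so the coefficient of the alternating lift of a
longest word `w` in the support of `P` is the coefficient of `w` in `P`.
-/

namespace GoodearlMenal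

open FreeGroup MonoidAlgebra
open scoped ENNReal lp

noncomputable section

section Reduced

variable {α : Type*}

theorem mk_eq_mk_iff_of_isReduced {L₁ L₂ : List (α × Bool)} (h₁ : IsReduced L₁)
    (h₂ : IsReduced L₂) : mk L₁ = mk L₂ ↔ L₁ = L₂ := by
  classical
  refine ⟨fun h => ?_, congrArg mk⟩
  rw [← h₁.reduce_eq, ← h₂.reduce_eq, ← toWord_mk, ← toWord_mk, h]

theorem inv_mk_singleton_mul (q : α × Bool) (L : List (α × Bool)) :
    (mk [q])⁻¹ * mk L = mk ((q.1, !q.2) :: L) := by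
  rw [inv_mk, mul_mk]; rfl

theorem inv_mk_singleton_mul_mk_cons (q : α × Bool) (L : List (α × Bool)) :
    (mk [q])⁻¹ * mk (q :: L) = mk L := by
  rw [show q :: L = [q] ++ L from rfl, ← mul_mk, inv_mul_cancel_left]

theorem isReduced_cons_cons_of_ne {q ℓ : α × Bool} {L : List (α × Bool)} (h : IsReduced (ℓ :: L))
    (hq : q ≠ ℓ) : IsReduced ((q.1, !q.2) :: ℓ :: L) := by
  refine isReduced_cons_cons.2 ⟨fun h₁ => ?_, h⟩
  obtain ⟨a, b⟩ := q
  obtain ⟨c, d⟩ := ℓ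
  cases b <;> cases d <;> simp_all

end Reduced

variable {X : Type*}

/- The free group `F` has generators `inl x = ẋ` and `inr x = x̄`, and its letters are pairs
(generator, sign). For a generator `s` of the free algebra (`inl x = x`, `inr x = x*`),
`letter s b` is the letter `ẋ^{±1}` if `b` and `x̄^{±1}` otherwise, with the sign `-1` exactly for
`s = x*`; `source` recovers `s` from either of its two letters. -/
def letter : X ⊕ X → Bool → (X ⊕ X) × Bool
  | .inl x, b => (bif b then .inl x else .inr x, true)
  | .inr x, b => (bif b then .inl x else .inr x, false)

def source : (X ⊕ X) × Bool → X ⊕ X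
  | (c, true) => .inl (c.elim id id)
  | (c, false) => .inr (c.elim id id)

theorem source_eq_iff {ℓ : (X ⊕ X) × Bool} {s : X ⊕ X} :
    source ℓ = s ↔ ℓ = letter s true ∨ ℓ = letter s false := by
  obtain ⟨c | c, _ | _⟩ := ℓ <;> cases s <;> simp [source, letter, eq_comm]

@[simp]
theorem source_letter (s : X ⊕ X) (b : Bool) : source (letter s b) = s :=
  source_eq_iff.2 (by cases b <;> simp)

theorem letter_true_ne_false (s : X ⊕ X) : letter s true ≠ letter s false := by
  cases s <;> simp [letter]

theorem letter_fst_ne (s s' : X ⊕ X) (b : Bool) : (letter s b).1 ≠ (letter s' !b).1 := by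
  cases s <;> cases s' <;> cases b <;> simp [letter]

@[simp]
theorem mk_letter_inl (x : X) (b : Bool) :
    mk [letter (.inl x) b] = FreeGroup.of (bif b then .inl x else .inr x) :=
  rfl

@[simp]
theorem mk_letter_inr (x : X) (b : Bool) :
    mk [letter (.inr x) b] = (FreeGroup.of (bif b then .inl x else .inr x))⁻¹ := by
  rw [FreeGroup.of, inv_mk]; rfl

def phiMonoidHom : FreeMonoid (X ⊕ X) →* MonoidAlgebra ℂ (FreeGroup (X ⊕ X)) :=
  FreeMonoid.lift fun s => single (mk [letter s true]) 1 + single (mk [letter s false]) 1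

theorem coeff_phiMonoidHom_of_mul (s : X ⊕ X) (w : FreeMonoid (X ⊕ X)) (γ : FreeGroup (X ⊕ X)) :
    (phiMonoidHom (.of s * w)).coeff γ =
      (phiMonoidHom w).coeff ((mk [letter s true])⁻¹ * γ) +
        (phiMonoidHom w).coeff ((mk [letter s false])⁻¹ * γ) := by
  simp [phiMonoidHom, add_mul]

theorem coeff_phiMonoidHom_mk [DecidableEq X] (w : List (X ⊕ X)) {L : List ((X ⊕ X) × Bool)}
    (hL : IsReduced L) (hlen : w.length ≤ L.length) :
    (phiMonoidHom (.ofList w)).coeff (mk L) = if L.map source = w then 1 else 0 := by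
  induction w generalizing L with
  | nil =>
    have : (1 : FreeGroup (X ⊕ X)) = mk L ↔ L = [] := by
      rw [one_eq_mk, mk_eq_mk_iff_of_isReduced .nil hL, eq_comm]
    simp [one_def, Finsupp.single_apply, this]
  | cons s w ih =>
    obtain _ | ⟨ℓ, L⟩ := L
    · simp at hlen
    have hlen' : w.length ≤ L.length := by simpa using hlen
    have term : ∀ b, (phiMonoidHom (.ofList w)).coeff ((mk [letter s b])⁻¹ * mk (ℓ :: L)) =
        if ℓ = letter s b then (if L.map source = w then 1 else 0) else 0 := by
      intro b
      by_cases hb : ℓ = letter s b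
      · rw [if_pos hb, hb, inv_mk_singleton_mul_mk_cons, ih (hL.infix ⟨[ℓ], [], by simp⟩) hlen']
      · rw [if_neg hb, inv_mk_singleton_mul,
          ih (isReduced_cons_cons_of_ne hL (Ne.symm hb)) (by simp; omega), if_neg]
        intro h
        simp [← h] at hlen'
    rw [FreeMonoid.ofList_cons, coeff_phiMonoidHom_of_mul, term, term]
    simp only [List.map_cons, List.cons.injEq, source_eq_iff]
    have := letter_true_ne_false s
    by_cases h₁ : ℓ = letter s true <;> by_cases h₂ : ℓ = letter s false <;> simp_all

def alternatingLift : Bool → List (X ⊕ X) → List ((X ⊕ X) × Bool)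
  | _, [] => []
  | b, s :: w => letter s b :: alternatingLift (!b) w

theorem map_source_alternatingLift (b : Bool) (w : List (X ⊕ X)) :
    (alternatingLift b w).map source = w := by
  induction w generalizing b with
  | nil => rfl
  | cons s w ih => simp [alternatingLift, ih]

theorem isReduced_alternatingLift (b : Bool) (w : List (X ⊕ X)) :
    IsReduced (alternatingLift b w) := by
  induction w generalizing b with
  | nil => exact .nil
  | cons s w ih =>
    cases w with
    | nil => exact .singleton
    | cons s' w => exact isReduced_cons_cons.2 ⟨fun h => absurd h (letter_fst_ne s s' b), ih !b⟩

def phiAlgHom : MonoidAlgebra ℂ (FreeMonoid (X ⊕ X)) →ₐ[ℂ] MonoidAlgebra ℂ (FreeGroup (X ⊕ X)) :=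
  MonoidAlgebra.lift ℂ _ _ phiMonoidHom

theorem coeff_phiAlgHom_mk [DecidableEq X] (P : MonoidAlgebra ℂ (FreeMonoid (X ⊕ X)))
    {L : List ((X ⊕ X) × Bool)} (hL : IsReduced L)
    (hlen : ∀ w ∈ P.coeff.support, w.length ≤ L.length) :
    (phiAlgHom P).coeff (mk L) = P.coeff (.ofList (L.map source)) := by
  classical
  rw [phiAlgHom, lift_apply, coeff_finsuppSum, Finsupp.sum, Finset.sum_apply']
  have : ∀ w ∈ P.coeff.support, (P.coeff w • phiMonoidHom w).coeff (mk L) =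
      if .ofList (L.map source) = w then P.coeff w else 0 := by
    intro w hw
    rw [coeff_smul, Finsupp.smul_apply, ← FreeMonoid.ofList_toList w,
      coeff_phiMonoidHom_mk _ hL (hlen w hw)]
    simp [← Equiv.eq_symm_apply]
  rw [Finset.sum_congr rfl this, Finset.sum_ite_eq]
  split_ifs with h
  · rfl
  · exact (Finsupp.notMem_support_iff.1 h).symm

theorem exists_isReduced_map_source_eq (w : List (X ⊕ X)) :
    ∃ L, IsReduced L ∧ L.map source = w :=
  ⟨alternatingLift true w, isReduced_alternatingLift true w, map_source_alternatingLift true w⟩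

theorem phiAlgHom_injective : Function.Injective (phiAlgHom (X := X)) := by
  classical
  rw [injective_iff_map_eq_zero]
  intro P hP
  by_contra hne
  have hsupp : P.coeff.support.Nonempty := by simpa [coeff_inj] using hne
  obtain ⟨w₀, hw₀, hmax⟩ := P.coeff.support.exists_max_image FreeMonoid.length hsupp
  obtain ⟨L, hL, hLw₀⟩ := exists_isReduced_map_source_eq w₀.toList
  have hlen : w₀.length = L.length := by rw [← List.length_map source, hLw₀]; rfl
  have hcoeff := coeff_phiAlgHom_mk P hL (hlen ▸ hmax)
  rw [hP, hLw₀, FreeMonoid.ofList_toList] at hcoeff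
  exact Finsupp.mem_support_iff.1 hw₀ hcoeff.symm

section Reindex

variable {α β 𝕜 E : Type*} [NormedField 𝕜] [NormedAddCommGroup E] [NormedSpace 𝕜 E]
  {p : ℝ≥0∞}

theorem memℓp_comp_equiv (hp : 0 < p.toReal) (e : α ≃ β) {f : β → E} (hf : Memℓp f p) :
    Memℓp (f ∘ e) p :=
  memℓp_gen (e.summable_iff.2 ((memℓp_gen_iff hp).1 hf))

def lpCompEquiv [Fact (1 ≤ p)] (hp : 0 < p.toReal) (e : α ≃ β) :
    lp (fun _ : β => E) p ≃ₗᵢ[𝕜] lp (fun _ : α => E) p where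
  toFun f := (⟨f ∘ e, memℓp_comp_equiv hp e f.2⟩ : lp (fun _ : α => E) p)
  invFun f := (⟨f ∘ e.symm, memℓp_comp_equiv hp e.symm f.2⟩ : lp (fun _ : β => E) p)
  map_add' _ _ := rfl
  map_smul' _ _ := rfl
  left_inv f := by ext; simp
  right_inv f := by ext; simp
  norm_map' f := by
    refine (Real.rpow_left_injOn hp.ne' (norm_nonneg _) (norm_nonneg _)) ?_
    dsimp only
    rw [lp.norm_rpow_eq_tsum hp, lp.norm_rpow_eq_tsum hp]
    exact e.tsum_eq fun b => ‖f b‖ ^ p.toReal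

@[simp]
theorem coe_lpCompEquiv [Fact (1 ≤ p)] (hp : 0 < p.toReal) (e : α ≃ β) (f : lp (fun _ : β => E) p) :
    ⇑(lpCompEquiv (𝕜 := 𝕜) hp e f) = f ∘ e :=
  rfl

end Reindex

variable {G : Type*} [Group G]

def leftRegular : G →* (ℓ²(G, ℂ) ≃ₗᵢ[ℂ] ℓ²(G, ℂ)) where
  toFun g := lpCompEquiv (by norm_num) (Equiv.mulLeft g⁻¹)
  map_one' := by ext; simp
  map_mul' g h := by ext; simp [LinearIsometryEquiv.mul_def, mul_assoc]

def regularUnitary : G →* unitary (ℓ²(G, ℂ) →L[ℂ] ℓ²(G, ℂ)) :=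
  Unitary.linearIsometryEquiv.symm.toMonoidHom.comp leftRegular

def regularRep : MonoidAlgebra ℂ G →ₐ[ℂ] (ℓ²(G, ℂ) →L[ℂ] ℓ²(G, ℂ)) :=
  MonoidAlgebra.lift ℂ _ G ((unitary _).subtype.comp regularUnitary)

theorem regularRep_single (g : G) (c : ℂ) :
    regularRep (MonoidAlgebra.single g c) = c • (regularUnitary g : ℓ²(G, ℂ) →L[ℂ] ℓ²(G, ℂ)) :=
  MonoidAlgebra.lift_single _ _ _

theorem regularRep_apply_single_one [DecidableEq G] (m : MonoidAlgebra ℂ G) :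
    ⇑(regularRep m (lp.single 2 1 1)) = ⇑m.coeff := by
  induction m using MonoidAlgebra.induction_linear with
  | zero => ext; simp
  | add x y hx hy =>
    rw [map_add, add_apply, lp.coeFn_add, hx, hy, MonoidAlgebra.coeff_add,
      Finsupp.coe_add]
  | single g c =>
    ext h
    simp [regularRep_single, regularUnitary, leftRegular, lp.single_apply, Pi.single_apply,
      Finsupp.single_apply, inv_mul_eq_one]

theorem regularRep_injective : Function.Injective (regularRep (G := G)) := by
  classical
  rw [injective_iff_map_eq_zero]
  intro m hm
  ext g
  simpa [hm] using (congrFun (regularRep_apply_single_one m) g).symm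

theorem regularRep_phiMonoidHom_of_inl (x : X) :
    regularRep (phiMonoidHom (.of (.inl x))) =
      ↑(regularUnitary (FreeGroup.of (Sum.inl x : X ⊕ X))) +
        ↑(regularUnitary (FreeGroup.of (Sum.inr x : X ⊕ X))) := by
  simp [phiMonoidHom, regularRep_single]

theorem regularRep_phiMonoidHom_of_inr (x : X) :
    regularRep (phiMonoidHom (.of (.inr x))) =
      star ↑(regularUnitary (FreeGroup.of (Sum.inl x : X ⊕ X))) +
        star ↑(regularUnitary (FreeGroup.of (Sum.inr x : X ⊕ X))) := by
  simp [phiMonoidHom, regularRep_single, ← Unitary.coe_star, Unitary.star_eq_inv]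

end

end GoodearlMenal

open GoodearlMenal

theorem goodearl_menal_map_injective_general
    {X : Type} {U : Type}
    [NormedRing U] [StarRing U] [NormedAlgebra ℂ U]
    (u v : X → unitary U)
    (huniv : ∀ (A : Type) (_ : NormedRing A) (_ : StarRing A) (_ : CStarRing A)
      (_ : NormedAlgebra ℂ A) (_ : StarModule ℂ A) (_ : CompleteSpace A)
      (a b : X → unitary A),
      ∃! φ : U →⋆ₐ[ℂ] A, ∀ x, φ ((u x : U)) = (a x : A) ∧ φ ((v x : U)) = (b x : A)) :
    Function.Injective
      (FreeAlgebra.lift ℂ (Sum.elim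
        (fun x : X => (u x : U) + (v x : U))
        (fun x : X => star ((u x : U)) + star ((v x : U))))) := by
  classical
  obtain ⟨ρ, hρ, -⟩ := huniv _ inferInstance inferInstance inferInstance inferInstance
    inferInstance inferInstance (fun x => regularUnitary (FreeGroup.of (Sum.inl x : X ⊕ X)))
    (fun x => regularUnitary (FreeGroup.of (Sum.inr x : X ⊕ X)))
  refine Function.Injective.of_comp (f := ρ) ?_
  convert (regularRep_injective.comp phiAlgHom_injective).comp
    (FreeAlgebra.equivMonoidAlgebraFreeMonoid (R := ℂ) (X := X ⊕ X)).injective using 1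
  show ⇑(ρ.toAlgHom.comp (FreeAlgebra.lift ℂ _)) =
    ⇑((regularRep.comp phiAlgHom).comp FreeAlgebra.equivMonoidAlgebraFreeMonoid.toAlgHom)
  refine congrArg _ (FreeAlgebra.hom_ext (funext fun s => ?_))
  cases s with
  | inl x => simpa [FreeAlgebra.equivMonoidAlgebraFreeMonoid, phiAlgHom, hρ] using
      (regularRep_phiMonoidHom_of_inl x).symm
  | inr x => simpa [FreeAlgebra.equivMonoidAlgebraFreeMonoid, phiAlgHom, hρ, map_star] using
      (regularRep_phiMonoidHom_of_inr x).symm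

/-- Let `U` be the full group C*-algebra of the free group on two copies
`{ẋ}, {x̄}` of a set `X` — i.e. a unital C*-algebra with unitaries
`u x = ẋ`, `v x = x̄` that is universal for such families of unitaries.  Then
the *-homomorphism `φ` from the free *-algebra `ℂ[X ∪ X*]` (modelled as
`FreeAlgebra ℂ (X ⊕ X)`) determined by `φ(x) = ẋ + x̄` (so
`φ(x*) = ẋ⁻¹ + x̄⁻¹ = (ẋ + x̄)*`) is injective. -/
theorem goodearl_menal_map_injective
    {X : Type} {U : Type}
    [NormedRing U] [StarRing U] [CStarRing U] [NormedAlgebra ℂ U]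
    [StarModule ℂ U] [CompleteSpace U]
    (u v : X → unitary U)
    (huniv : ∀ (A : Type) (_ : NormedRing A) (_ : StarRing A) (_ : CStarRing A)
      (_ : NormedAlgebra ℂ A) (_ : StarModule ℂ A) (_ : CompleteSpace A)
      (a b : X → unitary A),
      ∃! φ : U →⋆ₐ[ℂ] A, ∀ x, φ ((u x : U)) = (a x : A) ∧ φ ((v x : U)) = (b x : A)) :
    Function.Injective
      (FreeAlgebra.lift ℂ (Sum.elim
        (fun x : X => (u x : U) + (v x : U))
        (fun x : X => star ((u x : U)) + star ((v x : U))))) :=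
  goodearl_menal_map_injective_general u v huniv
end
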